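/- The following Christoffel symbols of the metric G vanish identically on ℝ^{n+4}: Γ^î_{ĵ k̂} = 0 and Γ^î_{ĵ, n+3} = 0 for all î, ĵ, k̂ ∈ {3, …, n+2}; Γ^{n+3}_{a b} = Γ^{n+4}_{a b} = 0 for all a, b ∈ {1, …, n+4}; and Γ^a_{1 b} = Γ^a_{2 b} = 0 for all a, b ∈ {1, …, n+4}. -/

import Mathlib

/-! The metric does not depend on `x¹, x²`; its rows `1` and `2` are the constant unit vectors
`e_{n+3}`, `e_{n+4}`, and row `î` is `e_î + u^î e_{n+4}`. Hence `G` is invertible (solve `G v = 0`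
row by row) and rows `n+3`, `n+4`, `î` of `G⁻¹` are `e_1`, `e_2`, `e_î - u^î e_2`. The bracket
`[d; bc] = ∂_b G_{dc} + ∂_c G_{bd} - ∂_d G_{bc}` vanishes as soon as `d` or `b` lies in `{1, 2}`,
which gives `Γ^{n+3} = Γ^{n+4} = 0`, `Γ^a_{1b} = Γ^a_{2b} = 0` and `Γ^î_{bc} = ½ [î; bc]`; finally
`[î; ĵc] = 0` for `c ≠ n+4`, since then `G_{îc}`, `G_{ĵî}`, `G_{ĵc}` are constant. -/

namespace HolPaper

open Matrix

/-- Points of `ℝ^{n+4}`, with coordinates indexed by `Fin (n+4)`.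
The paper's index `1` is `p1`, `2` is `p2`, `î ∈ {3,…,n+2}` is `ehat i` for `i : Fin n`,
`n+3` is `q1` and `n+4` is `q2`. -/
abbrev Pt (n : ℕ) := Fin (n + 4) → ℝ

def p1 (n : ℕ) : Fin (n + 4) := ⟨0, by omega⟩
def p2 (n : ℕ) : Fin (n + 4) := ⟨1, by omega⟩
def ehat {n : ℕ} (i : Fin n) : Fin (n + 4) := ⟨i.1 + 2, by have := i.isLt; omega⟩
def q1 (n : ℕ) : Fin (n + 4) := ⟨n + 2, by omega⟩
def q2 (n : ℕ) : Fin (n + 4) := ⟨n + 3, by omega⟩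

noncomputable section

variable {n N : ℕ}

/-- `u^î(x) = Σ_ĵ Σ_α (A_α)_{î-2,ĵ-2} x^ĵ (x^{n+3})^α`. -/
def u (A : Fin N → Matrix (Fin n) (Fin n) ℝ) (i : Fin n) (x : Pt n) : ℝ :=
  ∑ j : Fin n, ∑ α : Fin N, A α i j * x (ehat j) * x (q1 n) ^ (α.1 + 1)

/-- `F(x) = Σ_î (x^î)²`. -/
def Fq (n : ℕ) (x : Pt n) : ℝ := ∑ i : Fin n, x (ehat i) ^ 2

/-- The Gram matrix `G(x)` of the metric. -/
def Gmet (A : Fin N → Matrix (Fin n) (Fin n) ℝ) (x : Pt n) :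
    Matrix (Fin (n + 4)) (Fin (n + 4)) ℝ := fun a b =>
  (if (a = p1 n ∧ b = q1 n) ∨ (a = q1 n ∧ b = p1 n) then (1 : ℝ) else 0)
  + (if (a = p2 n ∧ b = q2 n) ∨ (a = q2 n ∧ b = p2 n) then (1 : ℝ) else 0)
  + (∑ i : Fin n, if a = ehat i ∧ b = ehat i then (1 : ℝ) else 0)
  + (∑ i : Fin n, if (a = ehat i ∧ b = q2 n) ∨ (a = q2 n ∧ b = ehat i) then u A i x else 0)
  + (if (a = q1 n ∧ b = q1 n) ∨ (a = q2 n ∧ b = q2 n) then Fq n x else 0)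

/-- Partial derivative `∂_b f` of a function on `ℝ^{n+4}`. -/
def pd (b : Fin (n + 4)) (f : Pt n → ℝ) (x : Pt n) : ℝ :=
  fderiv ℝ f x (Pi.single b 1)

/-- Christoffel symbols
`Γ^a_{bc} = ½ Σ_d G^{ad} (∂_b G_{dc} + ∂_c G_{bd} − ∂_d G_{bc})`. -/
def Γchr (A : Fin N → Matrix (Fin n) (Fin n) ℝ) (a b c : Fin (n + 4)) (x : Pt n) : ℝ :=
  (1 / 2) * ∑ d : Fin (n + 4), (Gmet A x)⁻¹ a d *
    (pd b (fun y => Gmet A y d c) x + pd c (fun y => Gmet A y b d) x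
      - pd d (fun y => Gmet A y b c) x)

/-- Curvature components
`R^a_{b,c,d} = ∂_c Γ^a_{db} − ∂_d Γ^a_{cb} + Σ_e (Γ^a_{ce} Γ^e_{db} − Γ^a_{de} Γ^e_{cb})`. -/
def Rcurv (A : Fin N → Matrix (Fin n) (Fin n) ℝ) (a b c d : Fin (n + 4)) (x : Pt n) : ℝ :=
  pd c (Γchr A a d b) x - pd d (Γchr A a c b) x
  + ∑ e : Fin (n + 4), (Γchr A a c e x * Γchr A e d b x - Γchr A a d e x * Γchr A e c b x)

/-- Auxiliary recursion for iterated covariant derivatives of the curvature; the list of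
differentiation indices is stored in *reverse* order (most recent derivative first). -/
def covRAux (A : Fin N → Matrix (Fin n) (Fin n) ℝ) :
    Fin (n + 4) → Fin (n + 4) → Fin (n + 4) → Fin (n + 4) → List (Fin (n + 4)) → Pt n → ℝ
  | a, b, c, d, [], x => Rcurv A a b c d x
  | a, b, c, d, f :: fs, x =>
      pd f (covRAux A a b c d fs) x
      + ∑ l : Fin (n + 4), Γchr A a f l x * covRAux A l b c d fs x
      - ∑ l : Fin (n + 4), Γchr A l f b x * covRAux A a l c d fs x
      - ∑ l : Fin (n + 4), Γchr A l f c x * covRAux A a b l d fs x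
      - ∑ l : Fin (n + 4), Γchr A l f d x * covRAux A a b c l fs x
      - ∑ s : Fin fs.length, ∑ l : Fin (n + 4),
          Γchr A l f (fs.get s) x * covRAux A a b c d (fs.set s l) x
  termination_by a b c d fs => fs.length
  decreasing_by all_goals simp [List.length_set]

/-- `covR A a b c d [f_1, …, f_r] x` is the component `R^a_{b,c,d;f_1;…;f_r}(x)` of the
`r`-th covariant derivative of the curvature tensor (indices in natural order). -/
def covR (A : Fin N → Matrix (Fin n) (Fin n) ℝ) (a b c d : Fin (n + 4))
    (fs : List (Fin (n + 4))) (x : Pt n) : ℝ :=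
  covRAux A a b c d fs.reverse x

theorem _root_.fderiv_apply_eq_zero_of_forall_add_smul {𝕜 E F : Type*}
    [NontriviallyNormedField 𝕜] [NormedAddCommGroup E] [NormedSpace 𝕜 E]
    [NormedAddCommGroup F] [NormedSpace 𝕜 F] {f : E → F} {x v : E}
    (h : ∀ t : 𝕜, f (x + t • v) = f x) : fderiv 𝕜 f x v = 0 := by
  by_cases hf : DifferentiableAt 𝕜 f x
  · rw [← hf.lineDeriv_eq_fderiv, lineDeriv]
    simp [h]
  · simp [fderiv_zero_of_not_differentiableAt hf]

theorem _root_.Matrix.inv_row_eq_of_vecMul_eq {ι K : Type*} [Fintype ι] [DecidableEq ι] [Field K]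
    {M : Matrix ι ι K} (hM : IsUnit M.det) {w : ι → K} {a : ι} (h : w ᵥ* M = Pi.single a 1) :
    M⁻¹ a = w := by
  rw [← Matrix.row_apply' M⁻¹, ← single_one_vecMul, ← h, vecMul_vecMul, mul_nonsing_inv _ hM,
    vecMul_one]

section Indices

@[simp] lemma p1_ne_p2 : p1 n ≠ p2 n := by simp [p1, p2]
@[simp] lemma p2_ne_p1 : p2 n ≠ p1 n := by simp [p1, p2]
@[simp] lemma p1_ne_q1 : p1 n ≠ q1 n := by simp [p1, q1, Fin.ext_iff]
@[simp] lemma q1_ne_p1 : q1 n ≠ p1 n := by simp [p1, q1, Fin.ext_iff]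
@[simp] lemma p1_ne_q2 : p1 n ≠ q2 n := by simp [p1, q2, Fin.ext_iff]
@[simp] lemma q2_ne_p1 : q2 n ≠ p1 n := by simp [p1, q2, Fin.ext_iff]
@[simp] lemma p2_ne_q1 : p2 n ≠ q1 n := by simp [p2, q1, Fin.ext_iff]
@[simp] lemma q1_ne_p2 : q1 n ≠ p2 n := by simp [p2, q1, Fin.ext_iff]
@[simp] lemma p2_ne_q2 : p2 n ≠ q2 n := by simp [p2, q2, Fin.ext_iff]
@[simp] lemma q2_ne_p2 : q2 n ≠ p2 n := by simp [p2, q2, Fin.ext_iff]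
@[simp] lemma q1_ne_q2 : q1 n ≠ q2 n := by simp [q1, q2, Fin.ext_iff]
@[simp] lemma q2_ne_q1 : q2 n ≠ q1 n := by simp [q1, q2, Fin.ext_iff]
@[simp] lemma ehat_ne_p1 (i : Fin n) : ehat i ≠ p1 n := by simp [ehat, p1, Fin.ext_iff]
@[simp] lemma p1_ne_ehat (i : Fin n) : p1 n ≠ ehat i := (ehat_ne_p1 i).symm
@[simp] lemma ehat_ne_p2 (i : Fin n) : ehat i ≠ p2 n := by simp [ehat, p2, Fin.ext_iff]
@[simp] lemma p2_ne_ehat (i : Fin n) : p2 n ≠ ehat i := (ehat_ne_p2 i).symm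
@[simp] lemma ehat_ne_q1 (i : Fin n) : ehat i ≠ q1 n := by
  simp only [ehat, q1, ne_eq, Fin.ext_iff]; omega
@[simp] lemma q1_ne_ehat (i : Fin n) : q1 n ≠ ehat i := (ehat_ne_q1 i).symm
@[simp] lemma ehat_ne_q2 (i : Fin n) : ehat i ≠ q2 n := by
  simp only [ehat, q2, ne_eq, Fin.ext_iff]; omega
@[simp] lemma q2_ne_ehat (i : Fin n) : q2 n ≠ ehat i := (ehat_ne_q2 i).symm
@[simp] lemma ehat_inj {i j : Fin n} : ehat i = ehat j ↔ i = j := by simp [ehat, Fin.ext_iff]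

abbrev pIndices (n : ℕ) : Set (Fin (n + 4)) := {p1 n, p2 n}

lemma index_cases (a : Fin (n + 4)) :
    a = p1 n ∨ a = p2 n ∨ (∃ i, a = ehat i) ∨ a = q1 n ∨ a = q2 n := by
  obtain ⟨a, ha⟩ := a
  simp only [p1, p2, q1, q2, ehat, Fin.ext_iff]
  rcases Nat.lt_or_ge a 2 with h | h
  · omega
  · rcases Nat.lt_or_ge a (n + 2) with h' | h'
    · exact Or.inr (Or.inr (Or.inl ⟨⟨a - 2, by omega⟩, by simp; omega⟩))
    · omega

end Indices

section Metric

variable (A : Fin N → Matrix (Fin n) (Fin n) ℝ) (x : Pt n)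

lemma Gmet_comm (b c : Fin (n + 4)) : Gmet A x b c = Gmet A x c b := by
  simp only [Gmet, or_comm, and_comm]

lemma Gmet_p1 : Gmet A x (p1 n) = Pi.single (q1 n) 1 := by
  funext d; simp [Gmet, Pi.single_apply]

lemma Gmet_p2 : Gmet A x (p2 n) = Pi.single (q2 n) 1 := by
  funext d; simp [Gmet, Pi.single_apply]

lemma Gmet_ehat (i : Fin n) :
    Gmet A x (ehat i) = Pi.single (ehat i) 1 + u A i x • Pi.single (q2 n) 1 := by
  funext d; simp [Gmet, Pi.single_apply, ite_and]

lemma Gmet_q1 : Gmet A x (q1 n) = Pi.single (p1 n) 1 + Fq n x • Pi.single (q1 n) 1 := by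
  funext d; simp [Gmet, Pi.single_apply]

lemma Gmet_q2 : Gmet A x (q2 n) =
    Pi.single (p2 n) 1 + ∑ i, u A i x • Pi.single (ehat i) 1 + Fq n x • Pi.single (q2 n) 1 := by
  funext d; simp [Gmet, Pi.single_apply]

lemma eq_zero_of_Gmet_mulVec_eq_zero {v : Pt n} (hv : Gmet A x *ᵥ v = 0) : v = 0 := by
  have row (a : Fin (n + 4)) : Gmet A x a ⬝ᵥ v = 0 := congrFun hv a
  have hq1 : v (q1 n) = 0 := by simpa [Gmet_p1] using row (p1 n)
  have hq2 : v (q2 n) = 0 := by simpa [Gmet_p2] using row (p2 n)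
  have he (i : Fin n) : v (ehat i) = 0 := by
    simpa [Gmet_ehat, add_dotProduct, hq2] using row (ehat i)
  have hp1 : v (p1 n) = 0 := by simpa [Gmet_q1, add_dotProduct, hq1] using row (q1 n)
  have hp2 : v (p2 n) = 0 := by
    simpa [Gmet_q2, add_dotProduct, sum_dotProduct, he, hq2] using row (q2 n)
  funext a
  rcases index_cases a with rfl | rfl | ⟨i, rfl⟩ | rfl | rfl
  exacts [hp1, hp2, he i, hq1, hq2]

lemma isUnit_det_Gmet : IsUnit (Gmet A x).det := by
  rw [isUnit_iff_ne_zero, Ne, ← exists_mulVec_eq_zero_iff]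
  rintro ⟨v, hv, h⟩
  exact hv (eq_zero_of_Gmet_mulVec_eq_zero A x h)

lemma Gmet_inv_q1 : (Gmet A x)⁻¹ (q1 n) = Pi.single (p1 n) 1 :=
  inv_row_eq_of_vecMul_eq (isUnit_det_Gmet A x) (by rw [single_one_vecMul, row_apply', Gmet_p1])

lemma Gmet_inv_q2 : (Gmet A x)⁻¹ (q2 n) = Pi.single (p2 n) 1 :=
  inv_row_eq_of_vecMul_eq (isUnit_det_Gmet A x) (by rw [single_one_vecMul, row_apply', Gmet_p2])

lemma Gmet_inv_ehat (i : Fin n) :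
    (Gmet A x)⁻¹ (ehat i) = Pi.single (ehat i) 1 - u A i x • Pi.single (p2 n) 1 := by
  refine inv_row_eq_of_vecMul_eq (isUnit_det_Gmet A x) ?_
  rw [sub_vecMul, smul_vecMul, single_one_vecMul, single_one_vecMul, row_apply', row_apply',
    Gmet_ehat, Gmet_p2, add_sub_cancel_right]

end Metric

section Derivatives

variable (A : Fin N → Matrix (Fin n) (Fin n) ℝ) (x : Pt n)

lemma Gmet_add_smul_single {b : Fin (n + 4)} (hb : b ∈ pIndices n) (t : ℝ) :
    Gmet A (x + t • Pi.single b 1) = Gmet A x := by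
  funext c d
  rcases hb with rfl | rfl <;> simp [Gmet, u, Fq]

lemma pd_Gmet_eq_zero_of_mem {b : Fin (n + 4)} (hb : b ∈ pIndices n) (c d : Fin (n + 4)) :
    pd b (fun y => Gmet A y c d) x = 0 :=
  fderiv_apply_eq_zero_of_forall_add_smul fun t => by rw [Gmet_add_smul_single A x hb]

lemma pd_Gmet_row_eq_zero_of_mem {d : Fin (n + 4)} (hd : d ∈ pIndices n) (b c : Fin (n + 4)) :
    pd b (fun y => Gmet A y d c) x = 0 := by
  rcases hd with rfl | rfl <;> simp [pd, Gmet_p1, Gmet_p2]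

lemma pd_Gmet_col_eq_zero_of_mem {d : Fin (n + 4)} (hd : d ∈ pIndices n) (b c : Fin (n + 4)) :
    pd b (fun y => Gmet A y c d) x = 0 := by
  simp_rw [Gmet_comm A _ c d]
  exact pd_Gmet_row_eq_zero_of_mem A x hd b c

lemma pd_Gmet_ehat_eq_zero {c : Fin (n + 4)} (hc : c ≠ q2 n) (i : Fin n) (b : Fin (n + 4)) :
    pd b (fun y => Gmet A y (ehat i) c) x = 0 := by
  simp [pd, Gmet_ehat, hc]

end Derivatives

section Christoffel

variable (A : Fin N → Matrix (Fin n) (Fin n) ℝ)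

-- twice the Christoffel symbol of the first kind, `2 Γ_{dbc}`
def christoffelFirst (d b c : Fin (n + 4)) (x : Pt n) : ℝ :=
  pd b (fun y => Gmet A y d c) x + pd c (fun y => Gmet A y b d) x
    - pd d (fun y => Gmet A y b c) x

variable (x : Pt n)

lemma Γchr_eq_dotProduct (a b c : Fin (n + 4)) :
    Γchr A a b c x = 1 / 2 * ((Gmet A x)⁻¹ a ⬝ᵥ fun d => christoffelFirst A d b c x) :=
  rfl

lemma christoffelFirst_eq_zero_of_first_mem {d : Fin (n + 4)} (hd : d ∈ pIndices n)
    (b c : Fin (n + 4)) : christoffelFirst A d b c x = 0 := by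
  rw [christoffelFirst, pd_Gmet_row_eq_zero_of_mem A x hd, pd_Gmet_col_eq_zero_of_mem A x hd,
    pd_Gmet_eq_zero_of_mem A x hd, add_zero, sub_zero]

lemma christoffelFirst_eq_zero_of_second_mem {b : Fin (n + 4)} (hb : b ∈ pIndices n)
    (d c : Fin (n + 4)) : christoffelFirst A d b c x = 0 := by
  rw [christoffelFirst, pd_Gmet_eq_zero_of_mem A x hb, pd_Gmet_row_eq_zero_of_mem A x hb,
    pd_Gmet_row_eq_zero_of_mem A x hb, add_zero, sub_self]

lemma christoffelFirst_ehat_ehat_eq_zero (i j : Fin n) {c : Fin (n + 4)} (hc : c ≠ q2 n) :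
    christoffelFirst A (ehat i) (ehat j) c x = 0 := by
  rw [christoffelFirst, pd_Gmet_ehat_eq_zero A x hc, pd_Gmet_ehat_eq_zero A x (ehat_ne_q2 i),
    pd_Gmet_ehat_eq_zero A x hc, add_zero, sub_self]

lemma Γchr_q1_eq_zero (b c : Fin (n + 4)) : Γchr A (q1 n) b c x = 0 := by
  rw [Γchr_eq_dotProduct, Gmet_inv_q1, single_dotProduct,
    christoffelFirst_eq_zero_of_first_mem A x (.inl rfl), mul_zero, mul_zero]

lemma Γchr_q2_eq_zero (b c : Fin (n + 4)) : Γchr A (q2 n) b c x = 0 := by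
  rw [Γchr_eq_dotProduct, Gmet_inv_q2, single_dotProduct,
    christoffelFirst_eq_zero_of_first_mem A x (.inr rfl), mul_zero, mul_zero]

lemma Γchr_ehat (i : Fin n) (b c : Fin (n + 4)) :
    Γchr A (ehat i) b c x = 1 / 2 * christoffelFirst A (ehat i) b c x := by
  rw [Γchr_eq_dotProduct, Gmet_inv_ehat, sub_dotProduct, smul_dotProduct, single_dotProduct,
    single_dotProduct, christoffelFirst_eq_zero_of_first_mem A x (.inr rfl)]
  simp

lemma Γchr_eq_zero_of_mem {b : Fin (n + 4)} (hb : b ∈ pIndices n) (a c : Fin (n + 4)) :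
    Γchr A a b c x = 0 := by
  simp [Γchr_eq_dotProduct, christoffelFirst_eq_zero_of_second_mem A x hb]

end Christoffel

theorem statement4_general (n N : ℕ)
    (A : Fin N → Matrix (Fin n) (Fin n) ℝ) :
    (∀ (i j k : Fin n) (x : Pt n), Γchr A (ehat i) (ehat j) (ehat k) x = 0) ∧
    (∀ (i j : Fin n) (x : Pt n), Γchr A (ehat i) (ehat j) (q1 n) x = 0) ∧
    (∀ (a b : Fin (n + 4)) (x : Pt n),
      Γchr A (q1 n) a b x = 0 ∧ Γchr A (q2 n) a b x = 0) ∧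
    (∀ (a b : Fin (n + 4)) (x : Pt n),
      Γchr A a (p1 n) b x = 0 ∧ Γchr A a (p2 n) b x = 0) := by
  refine ⟨fun i j k x => ?_, fun i j x => ?_, fun a b x => ?_, fun a b x => ?_⟩
  · rw [Γchr_ehat, christoffelFirst_ehat_ehat_eq_zero A x i j (ehat_ne_q2 k), mul_zero]
  · rw [Γchr_ehat, christoffelFirst_ehat_ehat_eq_zero A x i j q1_ne_q2, mul_zero]
  · exact ⟨Γchr_q1_eq_zero A x a b, Γchr_q2_eq_zero A x a b⟩
  · exact ⟨Γchr_eq_zero_of_mem A x (.inl rfl) a b, Γchr_eq_zero_of_mem A x (.inr rfl) a b⟩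

/-- Vanishing Christoffel symbols: `Γ^î_{ĵk̂} = 0`, `Γ^î_{ĵ,n+3} = 0`,
`Γ^{n+3}_{ab} = Γ^{n+4}_{ab} = 0`, `Γ^a_{1b} = Γ^a_{2b} = 0`. -/
theorem statement4 (n N : ℕ) (hn : 1 ≤ n) (hN : 1 ≤ N)
    (A : Fin N → Matrix (Fin n) (Fin n) ℝ) (hA : ∀ α, (A α)ᵀ = -A α) :
    (∀ (i j k : Fin n) (x : Pt n), Γchr A (ehat i) (ehat j) (ehat k) x = 0) ∧
    (∀ (i j : Fin n) (x : Pt n), Γchr A (ehat i) (ehat j) (q1 n) x = 0) ∧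
    (∀ (a b : Fin (n + 4)) (x : Pt n),
      Γchr A (q1 n) a b x = 0 ∧ Γchr A (q2 n) a b x = 0) ∧
    (∀ (a b : Fin (n + 4)) (x : Pt n),
      Γchr A a (p1 n) b x = 0 ∧ Γchr A a (p2 n) b x = 0) :=
  statement4_general n N A

end
end HolPaper
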